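/- arXiv:1510.00964 — 4 statements merged into one kernel-verified Lean document; each statement's English description precedes it below -/
import Mathlib

section
/- The dimension dim is logarithmic: for A ⊆ X^m and B ⊆ X^n, dim(A × B) = dim A + dim B. -/
/-- `topDim A` is the supremum (in `WithBot ℕ`, with `sSup ∅ = ⊥ = -∞`) of all `k`
such that some coordinate projection of `A ⊆ X^m` onto `X^k` has nonempty interior. -/
noncomputable def topDim {X : Type*} [TopologicalSpace X] {m : ℕ} (A : Set (Fin m → X)) :
    WithBot ℕ :=
  sSup {d : WithBot ℕ | ∃ k : ℕ, d = (k : WithBot ℕ) ∧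
    ∃ l : Fin k → Fin m, StrictMono l ∧ (interior ((fun x => x ∘ l) '' A)).Nonempty}

/-- The product `A × B ⊆ X^(m+n)` of `A ⊆ X^m` and `B ⊆ X^n`. -/
def prodSet {X : Type*} {m n : ℕ} (A : Set (Fin m → X)) (B : Set (Fin n → X)) :
    Set (Fin (m + n) → X) :=
  {x | (fun i : Fin m => x (Fin.castAdd n i)) ∈ A ∧ (fun j : Fin n => x (Fin.natAdd m j)) ∈ B}

section Aux

variable {X : Type*} [TopologicalSpace X]

/-- The predicate underlying `topDim`. -/
def TDP {m : ℕ} (A : Set (Fin m → X)) (k : ℕ) : Prop :=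
  ∃ l : Fin k → Fin m, StrictMono l ∧ (interior ((fun x => x ∘ l) '' A)).Nonempty

lemma topDim_def {m : ℕ} (A : Set (Fin m → X)) :
    topDim A = sSup ((fun k : ℕ => (k : WithBot ℕ)) '' {k | TDP A k}) := by
  unfold topDim
  congr 1
  ext d
  constructor
  · rintro ⟨k, rfl, h⟩; exact ⟨k, h, rfl⟩
  · rintro ⟨k, h, rfl⟩; exact ⟨k, rfl, h⟩

lemma TDP_zero {m : ℕ} {A : Set (Fin m → X)} (hA : A.Nonempty) : TDP A 0 := by
  refine ⟨fun i => i.elim0, fun i => i.elim0, ?_⟩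
  have h1 : ((fun x : Fin m → X => x ∘ fun i : Fin 0 => i.elim0) '' A).Nonempty :=
    hA.image _
  have h2 : ((fun x : Fin m → X => x ∘ fun i : Fin 0 => i.elim0) '' A) = Set.univ := by
    apply Set.eq_univ_of_forall
    intro y
    obtain ⟨z, hz⟩ := h1
    have hyz : y = z := Subsingleton.elim _ _
    rw [hyz]; exact hz
  rw [h2, interior_univ]
  exact Set.univ_nonempty

lemma TDP_le {m : ℕ} {A : Set (Fin m → X)} {k : ℕ} (h : TDP A k) : k ≤ m := by
  obtain ⟨l, hl, -⟩ := h
  simpa using Fintype.card_le_of_injective l hl.injective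

lemma TDP_nonempty {m : ℕ} {A : Set (Fin m → X)} {k : ℕ} (h : TDP A k) : A.Nonempty := by
  obtain ⟨l, -, ⟨y, hy⟩⟩ := h
  obtain ⟨x, hx, -⟩ := interior_subset hy
  exact ⟨x, hx⟩

lemma TDP_empty {m : ℕ} {k : ℕ} : ¬ TDP (∅ : Set (Fin m → X)) k := by
  intro h
  exact Set.not_nonempty_empty (TDP_nonempty h)

/-- The homeomorphism splitting `X^(k₁+k₂)` as `X^k₁ × X^k₂`. -/
def splitHomeo (k₁ k₂ : ℕ) : (Fin (k₁ + k₂) → X) ≃ₜ (Fin k₁ → X) × (Fin k₂ → X) where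
  toFun y := (fun i => y (Fin.castAdd k₂ i), fun j => y (Fin.natAdd k₁ j))
  invFun p := Fin.append p.1 p.2
  left_inv y := by
    funext i
    exact Fin.addCases (fun i => Fin.append_left _ _ i) (fun j => Fin.append_right _ _ j) i
  right_inv p := by
    refine Prod.ext ?_ ?_ <;> funext i
    · exact Fin.append_left _ _ i
    · exact Fin.append_right _ _ i
  continuous_toFun := by
    refine Continuous.prodMk ?_ ?_ <;> exact continuous_pi fun i => continuous_apply _
  continuous_invFun := by
    refine continuous_pi fun i => ?_
    refine Fin.addCases
      (motive := fun i => Continuous fun p : (Fin k₁ → X) × (Fin k₂ → X) => Fin.append p.1 p.2 i)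
      ?_ ?_ i
    · intro i
      simp only [Fin.append_left]
      exact (continuous_apply i).comp continuous_fst
    · intro j
      simp only [Fin.append_right]
      exact (continuous_apply j).comp continuous_snd

lemma nonempty_interior_image_homeo {Y Z : Type*} [TopologicalSpace Y] [TopologicalSpace Z]
    (e : Y ≃ₜ Z) (s : Set Y) : (interior (e '' s)).Nonempty ↔ (interior s).Nonempty := by
  rw [← Homeomorph.image_interior, Set.image_nonempty]

lemma image_prodSet_append {m n k₁ k₂ : ℕ} (A : Set (Fin m → X)) (B : Set (Fin n → X))
    (l₁ : Fin k₁ → Fin m) (l₂ : Fin k₂ → Fin n) :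
    (fun x => x ∘ (Fin.append (fun i => Fin.castAdd n (l₁ i)) (fun j => Fin.natAdd m (l₂ j))))
        '' prodSet A B
      = (splitHomeo k₁ k₂).symm ''
          (((fun x => x ∘ l₁) '' A) ×ˢ ((fun x => x ∘ l₂) '' B)) := by
  ext y
  constructor
  · rintro ⟨x, ⟨hxA, hxB⟩, rfl⟩
    refine ⟨((fun i => x (Fin.castAdd n i)) ∘ l₁, (fun j => x (Fin.natAdd m j)) ∘ l₂),
      ⟨⟨_, hxA, rfl⟩, ⟨_, hxB, rfl⟩⟩, ?_⟩
    show Fin.append _ _ = _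
    funext i
    refine Fin.addCases (fun i₁ => ?_) (fun j₂ => ?_) i
    · rw [Fin.append_left]
      simp [Fin.append_left]
    · rw [Fin.append_right]
      simp [Fin.append_right]
  · rintro ⟨⟨u, v⟩, ⟨⟨a, ha, rfl⟩, ⟨b, hb, rfl⟩⟩, rfl⟩
    refine ⟨Fin.append a b, ⟨?_, ?_⟩, ?_⟩
    · convert ha using 1
      funext i
      exact Fin.append_left _ _ i
    · convert hb using 1
      funext j
      exact Fin.append_right _ _ j
    · show _ = Fin.append _ _
      funext i
      refine Fin.addCases (fun i₁ => ?_) (fun j₂ => ?_) i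
      · rw [Fin.append_left]
        simp [Fin.append_left]
      · rw [Fin.append_right]
        simp [Fin.append_right]

lemma interior_image_append_iff {m n k₁ k₂ : ℕ} (A : Set (Fin m → X)) (B : Set (Fin n → X))
    (l₁ : Fin k₁ → Fin m) (l₂ : Fin k₂ → Fin n) :
    (interior ((fun x => x ∘
        (Fin.append (fun i => Fin.castAdd n (l₁ i)) (fun j => Fin.natAdd m (l₂ j))))
        '' prodSet A B)).Nonempty
      ↔ (interior ((fun x => x ∘ l₁) '' A)).Nonempty ∧
        (interior ((fun x => x ∘ l₂) '' B)).Nonempty := by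
  rw [image_prodSet_append, nonempty_interior_image_homeo, interior_prod_eq,
    Set.prod_nonempty_iff]

lemma strictMono_append {k₁ k₂ m n : ℕ} {l₁ : Fin k₁ → Fin m} {l₂ : Fin k₂ → Fin n}
    (h₁ : StrictMono l₁) (h₂ : StrictMono l₂) :
    StrictMono (Fin.append (fun i => Fin.castAdd n (l₁ i)) (fun j => Fin.natAdd m (l₂ j))) := by
  intro i j hij
  refine Fin.addCases (motive := fun i => i < j →
      Fin.append (fun i => Fin.castAdd n (l₁ i)) (fun j => Fin.natAdd m (l₂ j)) i <
      Fin.append (fun i => Fin.castAdd n (l₁ i)) (fun j => Fin.natAdd m (l₂ j)) j)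
    (fun i₁ h => ?_) (fun i₂ h => ?_) i hij
  · refine Fin.addCases (motive := fun j => Fin.castAdd k₂ i₁ < j →
        Fin.append (fun i => Fin.castAdd n (l₁ i)) (fun j => Fin.natAdd m (l₂ j))
          (Fin.castAdd k₂ i₁) <
        Fin.append (fun i => Fin.castAdd n (l₁ i)) (fun j => Fin.natAdd m (l₂ j)) j)
      (fun j₁ h => ?_) (fun j₂ h => ?_) j h
    · rw [Fin.append_left, Fin.append_left]
      have hij' : i₁ < j₁ := by
        simp only [Fin.lt_def, Fin.coe_castAdd] at h; exact h
      simp only [Fin.lt_def, Fin.coe_castAdd]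
      exact h₁ hij'
    · rw [Fin.append_left, Fin.append_right]
      have := (l₁ i₁).isLt
      simp only [Fin.lt_def, Fin.coe_castAdd, Fin.coe_natAdd]
      omega
  · refine Fin.addCases (motive := fun j => Fin.natAdd k₁ i₂ < j →
        Fin.append (fun i => Fin.castAdd n (l₁ i)) (fun j => Fin.natAdd m (l₂ j))
          (Fin.natAdd k₁ i₂) <
        Fin.append (fun i => Fin.castAdd n (l₁ i)) (fun j => Fin.natAdd m (l₂ j)) j)
      (fun j₁ h => ?_) (fun j₂ h => ?_) j h
    · exfalso
      have := j₁.isLt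
      simp only [Fin.lt_def, Fin.coe_castAdd, Fin.coe_natAdd] at h
      omega
    · rw [Fin.append_right, Fin.append_right]
      have hij' : i₂ < j₂ := by
        simp only [Fin.lt_def, Fin.coe_natAdd] at h; omega
      simp only [Fin.lt_def, Fin.coe_natAdd]
      exact Nat.add_lt_add_left (h₂ hij') m

lemma TDP_add {m n : ℕ} {A : Set (Fin m → X)} {B : Set (Fin n → X)} {k₁ k₂ : ℕ}
    (hA : TDP A k₁) (hB : TDP B k₂) : TDP (prodSet A B) (k₁ + k₂) := by
  obtain ⟨l₁, hl₁, hi₁⟩ := hA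
  obtain ⟨l₂, hl₂, hi₂⟩ := hB
  exact ⟨_, strictMono_append hl₁ hl₂,
    (interior_image_append_iff A B l₁ l₂).2 ⟨hi₁, hi₂⟩⟩

set_option maxRecDepth 10000 in
lemma split_strictMono {k m n : ℕ} (l : Fin k → Fin (m + n)) (hl : StrictMono l) :
    ∃ (k₁ k₂ : ℕ) (hk : k₁ + k₂ = k) (l₁ : Fin k₁ → Fin m) (l₂ : Fin k₂ → Fin n),
      StrictMono l₁ ∧ StrictMono l₂ ∧
      ∀ i : Fin (k₁ + k₂), l (Fin.cast hk i) =
        Fin.append (fun i => Fin.castAdd n (l₁ i)) (fun j => Fin.natAdd m (l₂ j)) i := by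
  classical
  set c : ℕ := (Finset.univ.filter (fun i : Fin k => (l i : ℕ) < m)).card with hc
  have hck : c ≤ k := by
    calc c ≤ Finset.univ.card := Finset.card_filter_le _ _
    _ = k := by simp
  have key : ∀ i : Fin k, (l i : ℕ) < m ↔ (i : ℕ) < c := by
    intro i
    constructor
    · intro hi
      have hsub : Finset.Iic i ⊆ Finset.univ.filter (fun j : Fin k => (l j : ℕ) < m) := by
        intro j hj
        simp only [Finset.mem_Iic] at hj
        simp only [Finset.mem_filter, Finset.mem_univ, true_and]
        rcases eq_or_lt_of_le hj with rfl | hj'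
        · exact hi
        · exact lt_of_le_of_lt (Nat.le_of_lt (Fin.lt_def.1 (hl hj'))) hi
      have := Finset.card_le_card hsub
      rw [Fin.card_Iic] at this
      omega
    · intro hi
      by_contra hnot
      push_neg at hnot
      have hsub : Finset.univ.filter (fun j : Fin k => (l j : ℕ) < m) ⊆ Finset.Iio i := by
        intro j hj
        simp only [Finset.mem_filter, Finset.mem_univ, true_and] at hj
        simp only [Finset.mem_Iio]
        by_contra hji
        push_neg at hji
        rcases eq_or_lt_of_le hji with rfl | hji'
        · omega
        · have := hl hji'
          simp only [Fin.lt_def] at this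
          omega
      have := Finset.card_le_card hsub
      rw [Fin.card_Iio] at this
      omega
  have hkc : c + (k - c) = k := by omega
  have hg₁ : ∀ i : Fin c, ((i : ℕ) : ℕ) < k := fun i => by omega
  have hg₂ : ∀ j : Fin (k - c), c + (j : ℕ) < k := fun j => by omega
  set g₁ : Fin c → Fin k := fun i => ⟨(i : ℕ), hg₁ i⟩ with hg₁def
  set g₂ : Fin (k - c) → Fin k := fun j => ⟨c + (j : ℕ), hg₂ j⟩ with hg₂def
  have hval₁ : ∀ i : Fin c, (l (g₁ i) : ℕ) < m := fun i => (key _).2 i.isLt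
  have hval₂ : ∀ j : Fin (k - c), m ≤ (l (g₂ j) : ℕ) := by
    intro j
    by_contra hcon
    push_neg at hcon
    have h5 := (key (g₂ j)).1 hcon
    have h2 : (g₂ j : ℕ) = c + (j : ℕ) := rfl
    omega
  refine ⟨c, k - c, hkc, fun i => ⟨(l (g₁ i) : ℕ), hval₁ i⟩,
    fun j => ⟨(l (g₂ j) : ℕ) - m, by have := (l (g₂ j)).isLt; have := hval₂ j; omega⟩,
    ?_, ?_, ?_⟩
  · intro i j hij
    have h1 : g₁ i < g₁ j := by
      rw [Fin.lt_def]
      exact Fin.lt_def.1 hij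
    rw [Fin.lt_def]
    exact Fin.lt_def.1 (hl h1)
  · intro i j hij
    have h1 : g₂ i < g₂ j := by
      rw [Fin.lt_def]
      show c + (i : ℕ) < c + (j : ℕ)
      exact Nat.add_lt_add_left (Fin.lt_def.1 hij) c
    rw [Fin.lt_def]
    show (l (g₂ i) : ℕ) - m < (l (g₂ j) : ℕ) - m
    have h2 := Fin.lt_def.1 (hl h1)
    have h3 := hval₂ i
    omega
  · intro i
    refine Fin.addCases (motive := fun i => l (Fin.cast hkc i) =
        Fin.append (fun i => Fin.castAdd n ⟨(l (g₁ i) : ℕ), hval₁ i⟩)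
          (fun j => Fin.natAdd m ⟨(l (g₂ j) : ℕ) - m, by
            have := (l (g₂ j)).isLt; have := hval₂ j; omega⟩) i)
      (fun i₁ => ?_) (fun j₂ => ?_) i
    · beta_reduce
      rw [Fin.append_left]
      have h4 : Fin.cast hkc (Fin.castAdd (k - c) i₁) = g₁ i₁ := by
        apply Fin.ext
        simp [hg₁def]
      rw [h4]
      apply Fin.ext
      rw [Fin.coe_castAdd]
    · beta_reduce
      rw [Fin.append_right]
      have h4 : Fin.cast hkc (Fin.natAdd c j₂) = g₂ j₂ := by
        apply Fin.ext
        simp [hg₂def]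
      rw [h4]
      apply Fin.ext
      rw [Fin.coe_natAdd]
      show (l (g₂ j₂) : ℕ) = m + ((l (g₂ j₂) : ℕ) - m)
      have := hval₂ j₂
      omega

/-- Precomposition with an equivalence of index types, as a homeomorphism. -/
def precompHomeo {a b : ℕ} (e : Fin a ≃ Fin b) : (Fin b → X) ≃ₜ (Fin a → X) where
  toFun y := y ∘ e
  invFun y := y ∘ e.symm
  left_inv y := by funext i; simp
  right_inv y := by funext i; simp
  continuous_toFun := continuous_pi fun i => continuous_apply _
  continuous_invFun := continuous_pi fun i => continuous_apply _

lemma TDP_split {m n : ℕ} {A : Set (Fin m → X)} {B : Set (Fin n → X)} {k : ℕ}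
    (h : TDP (prodSet A B) k) : ∃ k₁ k₂ : ℕ, k₁ + k₂ = k ∧ TDP A k₁ ∧ TDP B k₂ := by
  obtain ⟨l, hl, hi⟩ := h
  obtain ⟨k₁, k₂, hk, l₁, l₂, hl₁, hl₂, hcompat⟩ := split_strictMono l hl
  have himg : (fun x => x ∘
      (Fin.append (fun i => Fin.castAdd n (l₁ i)) (fun j => Fin.natAdd m (l₂ j))))
        '' prodSet A B
      = (precompHomeo (finCongr hk)) '' ((fun x => x ∘ l) '' prodSet A B) := by
    rw [← Set.image_comp]
    apply Set.image_congr
    intro x _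
    funext i
    exact congrArg x (hcompat i).symm
  have hi' : (interior ((fun x => x ∘
      (Fin.append (fun i => Fin.castAdd n (l₁ i)) (fun j => Fin.natAdd m (l₂ j))))
        '' prodSet A B)).Nonempty := by
    rw [himg, nonempty_interior_image_homeo]
    exact hi
  rw [interior_image_append_iff] at hi'
  exact ⟨k₁, k₂, hk, ⟨l₁, hl₁, hi'.1⟩, ⟨l₂, hl₂, hi'.2⟩⟩

lemma topDim_eq_coe {m : ℕ} {A : Set (Fin m → X)} (hA : A.Nonempty) :
    topDim A = (sSup {k : ℕ | TDP A k} : ℕ) := by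
  have hT0 : 0 ∈ {k : ℕ | TDP A k} := TDP_zero hA
  have hTb : BddAbove {k : ℕ | TDP A k} := ⟨m, fun k hk => TDP_le hk⟩
  have hmem : sSup {k : ℕ | TDP A k} ∈ {k : ℕ | TDP A k} := Nat.sSup_mem ⟨0, hT0⟩ hTb
  rw [topDim_def]
  apply le_antisymm
  · refine csSup_le ⟨((0 : ℕ) : WithBot ℕ), ⟨0, hT0, rfl⟩⟩ ?_
    rintro d ⟨k, hk, rfl⟩
    show ((k : ℕ) : WithBot ℕ) ≤ ((sSup {k : ℕ | TDP A k} : ℕ) : WithBot ℕ)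
    exact_mod_cast le_csSup hTb hk
  · refine le_csSup ?_ ⟨_, hmem, rfl⟩
    refine ⟨((m : ℕ) : WithBot ℕ), ?_⟩
    rintro d ⟨k, hk, rfl⟩
    show ((k : ℕ) : WithBot ℕ) ≤ ((m : ℕ) : WithBot ℕ)
    exact_mod_cast TDP_le hk

end Aux

/-- `dim` is logarithmic: `dim (A × B) = dim A + dim B`. -/
theorem topDim_prodSet {X : Type*} [TopologicalSpace X] {m n : ℕ}
    (A : Set (Fin m → X)) (B : Set (Fin n → X)) :
    topDim (prodSet A B) = topDim A + topDim B := by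
  rcases A.eq_empty_or_nonempty with rfl | hA
  · have h1 : prodSet (∅ : Set (Fin m → X)) B = ∅ := by
      ext x; simp [prodSet]
    have h2 : ∀ p : ℕ, ∀ C : Set (Fin p → X), C = ∅ → topDim C = ⊥ := by
      intro p C hC
      subst hC
      rw [topDim_def]
      have : {k : ℕ | TDP (∅ : Set (Fin p → X)) k} = ∅ := by
        ext k; simp [TDP_empty]
      rw [this]
      simp [WithBot.sSup_empty]
    rw [h2 _ _ h1, h2 _ _ rfl]
    simp
  rcases B.eq_empty_or_nonempty with rfl | hB
  · have h1 : prodSet A (∅ : Set (Fin n → X)) = ∅ := by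
      ext x; simp [prodSet]
    have h2 : ∀ p : ℕ, ∀ C : Set (Fin p → X), C = ∅ → topDim C = ⊥ := by
      intro p C hC
      subst hC
      rw [topDim_def]
      have : {k : ℕ | TDP (∅ : Set (Fin p → X)) k} = ∅ := by
        ext k; simp [TDP_empty]
      rw [this]
      simp [WithBot.sSup_empty]
    rw [h2 _ _ h1, h2 _ _ rfl]
    simp
  · have hAB : (prodSet A B).Nonempty := by
      obtain ⟨a, ha⟩ := hA
      obtain ⟨b, hb⟩ := hB
      refine ⟨Fin.append a b, ?_, ?_⟩
      · convert ha using 1; funext i; exact Fin.append_left _ _ i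
      · convert hb using 1; funext j; exact Fin.append_right _ _ j
    rw [topDim_eq_coe hA, topDim_eq_coe hB, topDim_eq_coe hAB]
    have hTbA : BddAbove {k : ℕ | TDP A k} := ⟨m, fun k hk => TDP_le hk⟩
    have hTbB : BddAbove {k : ℕ | TDP B k} := ⟨n, fun k hk => TDP_le hk⟩
    have hTbP : BddAbove {k : ℕ | TDP (prodSet A B) k} := ⟨m + n, fun k hk => TDP_le hk⟩
    have hmemA : sSup {k : ℕ | TDP A k} ∈ {k : ℕ | TDP A k} :=
      Nat.sSup_mem ⟨0, TDP_zero hA⟩ hTbA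
    have hmemB : sSup {k : ℕ | TDP B k} ∈ {k : ℕ | TDP B k} :=
      Nat.sSup_mem ⟨0, TDP_zero hB⟩ hTbB
    have hmemP : sSup {k : ℕ | TDP (prodSet A B) k} ∈ {k : ℕ | TDP (prodSet A B) k} :=
      Nat.sSup_mem ⟨0, TDP_zero hAB⟩ hTbP
    have hmain : sSup {k : ℕ | TDP (prodSet A B) k}
        = sSup {k : ℕ | TDP A k} + sSup {k : ℕ | TDP B k} := by
      apply le_antisymm
      · obtain ⟨k₁, k₂, hk, h1, h2⟩ := TDP_split hmemP
        calc sSup {k : ℕ | TDP (prodSet A B) k} = k₁ + k₂ := hk.symm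
        _ ≤ _ := Nat.add_le_add (le_csSup hTbA h1) (le_csSup hTbB h2)
      · exact le_csSup hTbP (TDP_add hmemA hmemB)
    rw [hmain]
    push_cast
    rfl
end

section
/- The dimension dim is stable on compact sets: if A, B ⊆ X^m are compact subsets of a topological space power X^m, then dim(A ∪ B) = max(dim A, dim B). -/
lemma interior_nonempty_of_union {X : Type*} [TopologicalSpace X] {C D : Set X}
    (hC : IsClosed C) (h : (interior (C ∪ D)).Nonempty) :
    (interior C).Nonempty ∨ (interior D).Nonempty := by
  by_cases hsub : interior (C ∪ D) ⊆ C
  · exact Or.inl (h.mono (interior_maximal hsub isOpen_interior))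
  · right
    obtain ⟨x, hx, hxC⟩ := Set.not_subset.mp hsub
    have hU : IsOpen (interior (C ∪ D) \ C) := isOpen_interior.sdiff hC
    have hUD : interior (C ∪ D) \ C ⊆ D := fun y ⟨hy, hyC⟩ =>
      (interior_subset hy).resolve_left hyC
    exact ⟨x, interior_maximal hUD hU ⟨hx, hxC⟩⟩

lemma topDim_set_bdd {X : Type*} [TopologicalSpace X] {m : ℕ} (A : Set (Fin m → X)) :
    (m : WithBot ℕ) ∈ upperBounds {d : WithBot ℕ | ∃ k : ℕ, d = (k : WithBot ℕ) ∧
      ∃ l : Fin k → Fin m, StrictMono l ∧ (interior ((fun x => x ∘ l) '' A)).Nonempty} := by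
  rintro d ⟨k, rfl, l, hl, -⟩
  have : k ≤ m := by simpa using Fintype.card_le_of_injective l hl.injective
  exact_mod_cast this

lemma withBot_sSup_mono {s t : Set (WithBot ℕ)} (hb : BddAbove t) (h : s ⊆ t) :
    sSup s ≤ sSup t := by
  rcases s.eq_empty_or_nonempty with rfl | hs
  · rw [WithBot.sSup_empty]; exact bot_le
  · exact csSup_le_csSup hb hs h

/-- `dim` is stable on compact sets (here with `X = ℝ`):
`dim (A ∪ B) = max (dim A) (dim B)` for compact `A, B ⊆ ℝ^m`. -/
theorem topDim_union_of_isCompact {m : ℕ} (A B : Set (Fin m → ℝ))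
    (hA : IsCompact A) (hB : IsCompact B) :
    topDim (A ∪ B) = max (topDim A) (topDim B) := by
  unfold topDim
  apply le_antisymm
  · rcases Set.eq_empty_or_nonempty {d : WithBot ℕ | ∃ k : ℕ, d = (k : WithBot ℕ) ∧
        ∃ l : Fin k → Fin m, StrictMono l ∧
          (interior ((fun x => x ∘ l) '' (A ∪ B))).Nonempty} with he | hne'
    · rw [he, WithBot.sSup_empty]; exact bot_le
    apply csSup_le hne'
    rintro d ⟨k, rfl, l, hl, hne⟩
    rw [Set.image_union] at hne
    have hcont : Continuous (fun x : Fin m → ℝ => x ∘ l) :=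
      continuous_pi fun i => continuous_apply (l i)
    have hcl : IsClosed ((fun x : Fin m → ℝ => x ∘ l) '' A) :=
      (hA.image hcont).isClosed
    rcases interior_nonempty_of_union hcl hne with h | h
    · exact le_max_of_le_left (le_csSup ⟨_, topDim_set_bdd A⟩ ⟨k, rfl, l, hl, h⟩)
    · exact le_max_of_le_right (le_csSup ⟨_, topDim_set_bdd B⟩ ⟨k, rfl, l, hl, h⟩)
  · apply max_le <;> apply withBot_sSup_mono ⟨_, topDim_set_bdd (A ∪ B)⟩ <;>
      rintro d ⟨k, rfl, l, hl, hne⟩ <;>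
      refine ⟨k, rfl, l, hl, hne.mono (interior_mono (Set.image_mono ?_))⟩
    · exact Set.subset_union_left
    · exact Set.subset_union_right
end

section
/- If A ⊆ ℝ^2 satisfies dim A = 0 (i.e., A is nonempty and neither of the two coordinate projections of A to ℝ has interior), then the topological (small inductive) dimension of A is 0. -/
lemma exists_notMem_of_interior_empty (S : Set ℝ) (hS : interior S = ∅) {c d : ℝ}
    (h : c < d) : ∃ t, c < t ∧ t < d ∧ t ∉ S := by
  by_contra h'
  push_neg at h'
  have hsub : Set.Ioo c d ⊆ interior S :=
    interior_maximal (fun t ht => h' t ht.1 ht.2) isOpen_Ioo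
  have : ((c + d) / 2 : ℝ) ∈ interior S := hsub ⟨by linarith, by linarith⟩
  rw [hS] at this
  exact this

/-- If `A ⊆ ℝ²` is nonempty and both coordinate projections of `A` to `ℝ` have empty
interior (i.e. `dim A = 0`), then the small inductive dimension of `A` is `0`:
`A` is nonempty and, in the subspace topology, every point of `A` has a neighborhood
basis of clopen sets. -/
theorem tdim_zero_of_dim_zero (A : Set (ℝ × ℝ)) (hne : A.Nonempty)
    (h1 : interior (Prod.fst '' A) = ∅) (h2 : interior (Prod.snd '' A) = ∅) :
    A.Nonempty ∧ ∀ x : A, ∀ V ∈ nhds x, ∃ U : Set A, IsClopen U ∧ x ∈ U ∧ U ⊆ V := by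
  refine ⟨hne, fun x V hV => ?_⟩
  rw [mem_nhds_subtype] at hV
  obtain ⟨u, hu, huV⟩ := hV
  obtain ⟨ε, hε, hball⟩ := Metric.mem_nhds_iff.mp hu
  set a := (x : ℝ × ℝ).1 with ha
  set b := (x : ℝ × ℝ).2 with hb
  obtain ⟨a1, ha1l, ha1r, ha1⟩ :=
    exists_notMem_of_interior_empty _ h1 (show a - ε < a by linarith)
  obtain ⟨a2, ha2l, ha2r, ha2⟩ :=
    exists_notMem_of_interior_empty _ h1 (show a < a + ε by linarith)
  obtain ⟨b1, hb1l, hb1r, hb1⟩ :=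
    exists_notMem_of_interior_empty _ h2 (show b - ε < b by linarith)
  obtain ⟨b2, hb2l, hb2r, hb2⟩ :=
    exists_notMem_of_interior_empty _ h2 (show b < b + ε by linarith)
  refine ⟨Subtype.val ⁻¹' (Set.Ioo a1 a2 ×ˢ Set.Ioo b1 b2), ⟨?_, ?_⟩, ?_, ?_⟩
  · -- closed: equals preimage of closed rectangle
    have heq : Subtype.val ⁻¹' (Set.Ioo a1 a2 ×ˢ Set.Ioo b1 b2) =
        (Subtype.val ⁻¹' (Set.Icc a1 a2 ×ˢ Set.Icc b1 b2) : Set A) := by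
      ext p
      have hpa : (p : ℝ × ℝ).1 ∈ Prod.fst '' A := ⟨p.1, p.2, rfl⟩
      have hpb : (p : ℝ × ℝ).2 ∈ Prod.snd '' A := ⟨p.1, p.2, rfl⟩
      have hna1 : (p : ℝ × ℝ).1 ≠ a1 := fun h => ha1 (h ▸ hpa)
      have hna2 : (p : ℝ × ℝ).1 ≠ a2 := fun h => ha2 (h ▸ hpa)
      have hnb1 : (p : ℝ × ℝ).2 ≠ b1 := fun h => hb1 (h ▸ hpb)
      have hnb2 : (p : ℝ × ℝ).2 ≠ b2 := fun h => hb2 (h ▸ hpb)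
      simp only [Set.mem_preimage, Set.mem_prod, Set.mem_Ioo, Set.mem_Icc]
      constructor
      · rintro ⟨⟨u1, u2⟩, v1, v2⟩; exact ⟨⟨u1.le, u2.le⟩, v1.le, v2.le⟩
      · rintro ⟨⟨u1, u2⟩, v1, v2⟩
        exact ⟨⟨u1.lt_of_ne (Ne.symm hna1), u2.lt_of_ne hna2⟩,
          v1.lt_of_ne (Ne.symm hnb1), v2.lt_of_ne hnb2⟩
    rw [heq]
    exact ((isClosed_Icc.prod isClosed_Icc).preimage continuous_subtype_val)
  · exact (isOpen_Ioo.prod isOpen_Ioo).preimage continuous_subtype_val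
  · exact ⟨⟨ha1r, ha2l⟩, hb1r, hb2l⟩
  · intro p hp
    obtain ⟨⟨hpa1, hpa2⟩, hpb1, hpb2⟩ := hp
    apply huV
    refine Set.mem_preimage.mpr (hball ?_)
    rw [Metric.mem_ball, Prod.dist_eq, max_lt_iff]
    constructor <;> rw [Real.dist_eq, abs_sub_lt_iff] <;> constructor <;> linarith
end

section
/- If A ⊆ ℝ is a Cantor set (nonempty, compact, totally disconnected, without isolated points) and L is the set of left endpoints of the complementary intervals of A (i.e., points a ∈ A that are the infimum of some connected component of ℝ \ A), then A \ L is not an F_σ set. -/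
open Set Filter Topology

private lemma nowhereDense_isMeagre {X : Type*} [TopologicalSpace X] {s : Set X}
    (h : IsNowhereDense s) : IsMeagre s := by
  rw [isMeagre_iff_countable_union_isNowhereDense]
  exact ⟨{s}, by simpa, Set.countable_singleton _, by simp⟩

private lemma glb_mem_A {A : Set ℝ} (hA : IsClosed A) {t x : ℝ} (ht : t ∉ A)
    (hx : IsGLB (connectedComponentIn Aᶜ t) x) : x ∈ A := by
  by_contra hxA
  set C := connectedComponentIn Aᶜ t with hC
  have hCopen : IsOpen C := hA.isOpen_compl.connectedComponentIn
  have htC : t ∈ C := mem_connectedComponentIn ht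
  have hxC : x ∉ C := by
    intro hxc
    obtain ⟨ε, hε, hball⟩ := Metric.isOpen_iff.1 hCopen x hxc
    have h1 : x - ε / 2 ∈ C := by
      apply hball
      rw [Real.ball_eq_Ioo]
      exact ⟨by linarith, by linarith⟩
    have := hx.1 h1
    linarith
  obtain ⟨ε, hε, hball⟩ := Metric.isOpen_iff.1 hA.isOpen_compl x hxA
  obtain ⟨c, hcC, hclt⟩ : ∃ c ∈ C, c < x + ε := by
    by_contra h; push_neg at h
    have : x + ε ≤ x := hx.2 fun c hc => h c hc
    linarith
  have hcgt : x < c := lt_of_le_of_ne (hx.1 hcC) (by rintro rfl; exact hxC hcC)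
  have hU : Set.Ioo (x - ε) (x + ε) ⊆ Aᶜ := by rw [← Real.ball_eq_Ioo]; exact hball
  have hconn : IsPreconnected (C ∪ Set.Ioo (x - ε) (x + ε)) :=
    IsPreconnected.union c hcC ⟨by linarith, hclt⟩ isPreconnected_connectedComponentIn
      isPreconnected_Ioo
  have hsub : C ∪ Set.Ioo (x - ε) (x + ε) ⊆ C :=
    hconn.subset_connectedComponentIn (Or.inl htC)
      (Set.union_subset (connectedComponentIn_subset _ _) hU)
  exact hxC (hsub (Or.inr ⟨by linarith, by linarith⟩))

private lemma dense_L {A : Set ℝ} (hA : IsClosed A) (htd : IsTotallyDisconnected A)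
    (hperf : ∀ x ∈ A, AccPt x (Filter.principal A)) {x : ℝ} (hx : x ∈ A) {ε : ℝ} (hε : 0 < ε) :
    ∃ a, (∃ t : ℝ, t ∉ A ∧ BddAbove (connectedComponentIn Aᶜ t) ∧
      IsGLB (connectedComponentIn Aᶜ t) a) ∧ |a - x| < ε := by
  obtain ⟨z, ⟨hzball, hzA⟩, hzne⟩ :=
    accPt_iff_nhds.1 (hperf x hx) (Metric.ball x ε) (Metric.ball_mem_nhds x hε)
  rw [Real.ball_eq_Ioo] at hzball
  rcases lt_or_gt_of_ne hzne with hlt | hlt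
  · -- z < x : find t ∈ Ioo z x with t ∉ A
    obtain ⟨t, htm, htA⟩ : ∃ t ∈ Set.Icc z x, t ∉ A := by
      by_contra h; push_neg at h
      exact hzne (htd _ h isPreconnected_Icc ⟨le_refl z, le_of_lt hlt⟩
        ⟨le_of_lt hlt, le_refl x⟩)
    have htz : z < t := lt_of_le_of_ne htm.1 (by rintro rfl; exact htA hzA)
    have htx : t < x := lt_of_le_of_ne htm.2 (by rintro rfl; exact htA hx)
    set C := connectedComponentIn Aᶜ t with hC
    have htC : t ∈ C := mem_connectedComponentIn htA
    have hCi : OrdConnected C := isPreconnected_connectedComponentIn.ordConnected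
    have hCsub : C ⊆ Set.Ioo z x := by
      intro c hc
      constructor
      · by_contra h; push_neg at h
        exact (connectedComponentIn_subset Aᶜ t (hCi.out hc htC ⟨h, le_of_lt htz⟩)) hzA
      · by_contra h; push_neg at h
        exact (connectedComponentIn_subset Aᶜ t (hCi.out htC hc ⟨le_of_lt htx, h⟩)) hx
    have hbdd : BddAbove C := ⟨x, fun c hc => le_of_lt (hCsub hc).2⟩
    have hbddb : BddBelow C := ⟨z, fun c hc => le_of_lt (hCsub hc).1⟩
    have hglb : IsGLB C (sInf C) := isGLB_csInf ⟨t, htC⟩ hbddb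
    refine ⟨sInf C, ⟨t, htA, hbdd, hglb⟩, ?_⟩
    have h1 : z ≤ sInf C := hglb.2 fun c hc => le_of_lt (hCsub hc).1
    have h2 : sInf C ≤ t := hglb.1 htC
    rw [abs_sub_lt_iff]
    constructor <;> [linarith; linarith [hzball.1]]
  · -- x < z
    obtain ⟨t, htm, htA⟩ : ∃ t ∈ Set.Icc x z, t ∉ A := by
      by_contra h; push_neg at h
      exact hzne (htd _ h isPreconnected_Icc ⟨le_of_lt hlt, le_refl z⟩
        ⟨le_refl x, le_of_lt hlt⟩)
    have htx : x < t := lt_of_le_of_ne htm.1 (by rintro rfl; exact htA hx)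
    have htz : t < z := lt_of_le_of_ne htm.2 (by rintro rfl; exact htA hzA)
    set C := connectedComponentIn Aᶜ t with hC
    have htC : t ∈ C := mem_connectedComponentIn htA
    have hCi : OrdConnected C := isPreconnected_connectedComponentIn.ordConnected
    have hCsub : C ⊆ Set.Ioo x z := by
      intro c hc
      constructor
      · by_contra h; push_neg at h
        exact (connectedComponentIn_subset Aᶜ t (hCi.out hc htC ⟨h, le_of_lt htx⟩)) hx
      · by_contra h; push_neg at h
        exact (connectedComponentIn_subset Aᶜ t (hCi.out htC hc ⟨le_of_lt htz, h⟩)) hzA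
    have hbdd : BddAbove C := ⟨z, fun c hc => le_of_lt (hCsub hc).2⟩
    have hbddb : BddBelow C := ⟨x, fun c hc => le_of_lt (hCsub hc).1⟩
    have hglb : IsGLB C (sInf C) := isGLB_csInf ⟨t, htC⟩ hbddb
    refine ⟨sInf C, ⟨t, htA, hbdd, hglb⟩, ?_⟩
    have h1 : x ≤ sInf C := hglb.2 fun c hc => le_of_lt (hCsub hc).1
    have h2 : sInf C ≤ t := hglb.1 htC
    rw [abs_sub_lt_iff]
    constructor <;> [linarith [hzball.2]; linarith]

private lemma countable_L {A : Set ℝ} (hA : IsClosed A) :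
    Set.Countable {x : ℝ | ∃ t : ℝ, t ∉ A ∧ BddAbove (connectedComponentIn Aᶜ t) ∧
      IsGLB (connectedComponentIn Aᶜ t) x} := by
  have hsub : {x : ℝ | ∃ t : ℝ, t ∉ A ∧ BddAbove (connectedComponentIn Aᶜ t) ∧
      IsGLB (connectedComponentIn Aᶜ t) x} ⊆
      ⋃ q : ℚ, {x : ℝ | IsGLB (connectedComponentIn Aᶜ (q : ℝ)) x} := by
    rintro x ⟨t, htA, _, hglb⟩
    have hCopen : IsOpen (connectedComponentIn Aᶜ t) := hA.isOpen_compl.connectedComponentIn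
    have htC : t ∈ connectedComponentIn Aᶜ t := mem_connectedComponentIn htA
    obtain ⟨ε, hε, hball⟩ := Metric.isOpen_iff.1 hCopen t htC
    obtain ⟨q, hq1, hq2⟩ := exists_rat_btwn (show t - ε < t + ε by linarith)
    have hqC : (q : ℝ) ∈ connectedComponentIn Aᶜ t := by
      apply hball; rw [Real.ball_eq_Ioo]; exact ⟨hq1, hq2⟩
    rw [connectedComponentIn_eq hqC] at hglb
    exact Set.mem_iUnion.2 ⟨q, hglb⟩
  refine Set.Countable.mono hsub (Set.countable_iUnion fun q => ?_)
  exact Set.Subsingleton.countable fun a ha b hb => IsGLB.unique ha hb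

/-- If `A ⊆ ℝ` is a Cantor set (nonempty, compact, totally disconnected, without
isolated points) and `L` is the set of left endpoints of the complementary intervals
of `A` (points that are greatest lower bounds of bounded connected components of
`ℝ \ A`), then `A \ L` is not `F_σ`. -/
theorem cantor_minus_left_endpoints_not_fsigma (A : Set ℝ)
    (hne : A.Nonempty) (hcomp : IsCompact A) (htd : IsTotallyDisconnected A)
    (hperf : ∀ x ∈ A, AccPt x (Filter.principal A)) :
    ¬ ∃ F : ℕ → Set ℝ, (∀ k, IsClosed (F k)) ∧
      A \ {x : ℝ | ∃ t : ℝ, t ∉ A ∧ BddAbove (connectedComponentIn Aᶜ t) ∧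
        IsGLB (connectedComponentIn Aᶜ t) x} = ⋃ k, F k := by
  rintro ⟨F, hFcl, hFeq⟩
  set L := {x : ℝ | ∃ t : ℝ, t ∉ A ∧ BddAbove (connectedComponentIn Aᶜ t) ∧
    IsGLB (connectedComponentIn Aᶜ t) x} with hLdef
  have hA : IsClosed A := hcomp.isClosed
  have hLsubA : L ⊆ A := by rintro x ⟨t, htA, _, hglb⟩; exact glb_mem_A hA htA hglb
  obtain ⟨x0, hx0⟩ := hne
  obtain ⟨a0, ha0, -⟩ := dense_L hA htd hperf hx0 one_pos
  have hLc : L.Countable := countable_L hA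
  obtain ⟨f, hf⟩ := Set.Countable.exists_eq_range hLc ⟨a0, ha0⟩
  haveI : CompactSpace ↥A := isCompact_iff_compactSpace.1 hcomp
  haveI : Nonempty ↥A := ⟨⟨x0, hx0⟩⟩
  haveI : BaireSpace ↥A := inferInstance
  have hFsub : ∀ k, F k ⊆ A \ L := fun k => hFeq ▸ Set.subset_iUnion F k
  -- piece 1 : preimages of F k are nowhere dense in A
  have hM1 : ∀ k, IsMeagre ((fun u : ↥A => (u : ℝ)) ⁻¹' F k) := by
    intro k
    apply nowhereDense_isMeagre
    have hcl : IsClosed ((fun u : ↥A => (u : ℝ)) ⁻¹' F k) :=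
      (hFcl k).preimage continuous_subtype_val
    rw [hcl.isNowhereDense_iff]
    by_contra h
    obtain ⟨u, hu⟩ := Set.nonempty_iff_ne_empty.2 h
    have hio : IsOpen (interior ((fun u : ↥A => (u : ℝ)) ⁻¹' F k)) := isOpen_interior
    obtain ⟨V, hVopen, hVeq⟩ := isOpen_induced_iff.1 hio
    have huV : (u : ℝ) ∈ V := by rw [← hVeq] at hu; exact hu
    obtain ⟨ε, hε, hball⟩ := Metric.isOpen_iff.1 hVopen _ huV
    obtain ⟨a, haL, haclose⟩ := dense_L hA htd hperf u.2 hε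
    have haA : a ∈ A := hLsubA haL
    have haV : a ∈ V := by apply hball; rw [Metric.mem_ball, Real.dist_eq]; exact haclose
    have hmem : (⟨a, haA⟩ : ↥A) ∈ interior ((fun u : ↥A => (u : ℝ)) ⁻¹' F k) := by
      rw [← hVeq]; exact haV
    have hFk : (⟨a, haA⟩ : ↥A) ∈ (fun u : ↥A => (u : ℝ)) ⁻¹' F k := interior_subset hmem
    exact (hFsub k hFk).2 haL
  -- piece 2 : singletons are nowhere dense in A
  have hM2 : ∀ n : ℕ, IsMeagre {u : ↥A | (u : ℝ) = f n} := by
    intro n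
    apply nowhereDense_isMeagre
    have hcl : IsClosed {u : ↥A | (u : ℝ) = f n} := by
      have : {u : ↥A | (u : ℝ) = f n} = (fun u : ↥A => (u : ℝ)) ⁻¹' {f n} := by
        ext u; simp
      rw [this]
      exact isClosed_singleton.preimage continuous_subtype_val
    rw [hcl.isNowhereDense_iff]
    by_contra h
    obtain ⟨u, hu⟩ := Set.nonempty_iff_ne_empty.2 h
    have hmem : {u : ↥A | (u : ℝ) = f n} ∈ 𝓝 u := mem_interior_iff_mem_nhds.1 hu
    obtain ⟨x, hxA⟩ := u
    rw [nhds_subtype_eq_comap, Filter.mem_comap] at hmem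
    obtain ⟨V, hV, hVsub⟩ := hmem
    obtain ⟨y, ⟨hyV, hyA⟩, hyne⟩ := accPt_iff_nhds.1 (hperf x hxA) V hV
    have h1 : y = f n := hVsub (show (⟨y, hyA⟩ : ↥A) ∈ Subtype.val ⁻¹' V from hyV)
    have hxV : x ∈ V := mem_of_mem_nhds hV
    have h2 : x = f n := hVsub (show (⟨x, hxA⟩ : ↥A) ∈ Subtype.val ⁻¹' V from hxV)
    exact hyne (h1.trans h2.symm)
  have hmeagre : IsMeagre (Set.univ : Set ↥A) := by
    have hcover : (Set.univ : Set ↥A) ⊆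
        (⋃ k, (fun u : ↥A => (u : ℝ)) ⁻¹' F k) ∪ ⋃ n, {u : ↥A | (u : ℝ) = f n} := by
      intro u _
      by_cases huL : (u : ℝ) ∈ L
      · right
        rw [hf] at huL
        obtain ⟨n, hn⟩ := huL
        exact Set.mem_iUnion.2 ⟨n, hn.symm⟩
      · left
        have : (u : ℝ) ∈ A \ L := ⟨u.2, huL⟩
        rw [hFeq] at this
        obtain ⟨k, hk⟩ := Set.mem_iUnion.1 this
        exact Set.mem_iUnion.2 ⟨k, hk⟩
    have hu1 : IsMeagre (⋃ k, (fun u : ↥A => (u : ℝ)) ⁻¹' F k) := isMeagre_iUnion hM1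
    have hu2 : IsMeagre (⋃ n, {u : ↥A | (u : ℝ) = f n}) := isMeagre_iUnion hM2
    have hunion : IsMeagre ((⋃ k, (fun u : ↥A => (u : ℝ)) ⁻¹' F k) ∪
        ⋃ n, {u : ↥A | (u : ℝ) = f n}) := by
      rw [IsMeagre, Set.compl_union]
      exact Filter.inter_mem hu1 hu2
    exact hunion.mono hcover
  have : Dense (∅ : Set ↥A) := by
    apply dense_of_mem_residual
    have := hmeagre
    rwa [IsMeagre, Set.compl_univ] at this
  exact absurd this.nonempty (by simp)
end
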